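/- arXiv:1503.05503 — 2 statements merged into one kernel-verified Lean document; each statement's English description precedes it below -/
import Mathlib

section
/- Let n be a nonnegative integer and z1, z2 ∈ H with z2 − z1 ∉ ℤ. Define Ξ_n^0(z1, z2, s) = 4 ∑_{b=1}^∞ (conj(z2) − conj(z1) − b)^n (z2 − conj(z1) − b)^n / (|z2 − z1 − b|^{2s} · |conj(z2) − z1 − b|^{2s}). Then: (i) the series converges absolutely for Re(s) > (2n+1)/4; (ii) the function s ↦ Ξ_n^0(z1, z2, s) − 4ζ(4s − 2n) extends holomorphically to the half-plane {s : Re(s) > n/2}; consequently Ξ_n^0 extends meromorphically to {s : Re(s) > n/2} whose only pole there is a simple pole at s = (2n+1)/4 with residue 1. -/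
/-!
The `b`-th term is `q_b ^ n * |q_b| ^ (-2 s)` with
`q_b = (z̄₂ - z̄₁ - b)(z₂ - z̄₁ - b) = b² (1 + O(1/b))`.
The map `q ↦ q ^ n |q| ^ (-2 s)` is multiplicative, and on annuli `δ ≤ |w| ≤ R` it is Lipschitz
at `w = 1` uniformly for bounded `s`. Since `q_b / b²` stays in such an annulus, the `b`-th term
differs from its value at `q = b²`, namely `b ^ (2n - 4s)`, by `O(b ^ (2n - 4 Re s - 1))`.
Hence the difference series is holomorphic for `Re s > n/2`, while the comparison series is
`ζ(4s - 2n)`, whose simple pole at `4s - 2n = 1` has residue `1`.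
-/

open Complex Filter Topology

noncomputable section

/-- The `b`-th term of the series `Ξ_n⁰(z₁, z₂, s)` (for `b ≥ 1`). -/
def Xi0Term (n : ℕ) (z1 z2 s : ℂ) (b : ℕ+) : ℂ :=
  (starRingEnd ℂ z2 - starRingEnd ℂ z1 - (b : ℂ)) ^ n * (z2 - starRingEnd ℂ z1 - (b : ℂ)) ^ n /
    ((‖z2 - z1 - (b : ℂ)‖ : ℂ) ^ (2 * s) * (‖starRingEnd ℂ z2 - z1 - (b : ℂ)‖ : ℂ) ^ (2 * s))

/-- `Ξ_n⁰(z₁, z₂, s) = 4 ∑_{b≥1} (…)`, the `c = 0` part of `Ξ_n`. -/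
def Xi0 (n : ℕ) (z1 z2 s : ℂ) : ℂ := 4 * ∑' b : ℕ+, Xi0Term n z1 z2 s b

open ComplexConjugate

lemma norm_pow_sub_pow_le {𝕜 : Type*} [NormedField 𝕜] {x y : 𝕜} {R : ℝ} (hx : ‖x‖ ≤ R)
    (hy : ‖y‖ ≤ R) (n : ℕ) : ‖x ^ n - y ^ n‖ ≤ n * R ^ (n - 1) * ‖x - y‖ := by
  have hR : 0 ≤ R := (norm_nonneg x).trans hx
  have hterm : ∀ i ∈ Finset.range n, ‖x ^ i * y ^ (n - 1 - i)‖ ≤ R ^ (n - 1) := fun i hi => by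
    have hi' : i + (n - 1 - i) = n - 1 := by have := Finset.mem_range.1 hi; omega
    calc ‖x ^ i * y ^ (n - 1 - i)‖ ≤ R ^ i * R ^ (n - 1 - i) := by
          rw [norm_mul, norm_pow, norm_pow]; gcongr
      _ = R ^ (n - 1) := by rw [← pow_add, hi']
  rw [← geom_sum₂_mul, norm_mul]
  gcongr
  simpa using norm_sum_le_of_le _ hterm

lemma abs_log_le_abs_sub_one_div {δ t : ℝ} (hδ : 0 < δ) (hδ1 : δ ≤ 1) (ht : δ ≤ t) :
    |Real.log t| ≤ |t - 1| / δ := by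
  have ht0 : 0 < t := hδ.trans_le ht
  have hupper : Real.log t ≤ |t - 1| / δ :=
    (Real.log_le_sub_one_of_pos ht0).trans
      ((le_abs_self _).trans (le_div_self (abs_nonneg _) hδ hδ1))
  have hlower : -Real.log t ≤ |t - 1| / δ :=
    calc -Real.log t ≤ t⁻¹ - 1 := by linarith [Real.one_sub_inv_le_log_of_pos ht0]
      _ = (1 - t) / t := by field_simp
      _ ≤ |t - 1| / t := by gcongr; rw [abs_sub_comm]; exact le_abs_self _
      _ ≤ |t - 1| / δ := by gcongr
  exact abs_le.2 ⟨by linarith, hupper⟩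

lemma exists_pos_le_norm_of_tendsto {ι 𝕜 : Type*} [NormedField 𝕜] {w : ι → 𝕜} {a : 𝕜}
    (hw : ∀ i, w i ≠ 0) (ha : a ≠ 0) (h : Tendsto w cofinite (𝓝 a)) :
    ∃ δ, 0 < δ ∧ ∀ i, δ ≤ ‖w i‖ := by
  obtain ⟨K, hK⟩ := (h.norm.inv₀ (norm_ne_zero_iff.2 ha)).bddAbove_range_of_cofinite
  refine ⟨(max K 1)⁻¹, by positivity, fun i => ?_⟩
  rw [inv_le_comm₀ (by positivity) (norm_pos_iff.2 (hw i))]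
  exact (hK ⟨i, rfl⟩).trans (le_max_left _ _)

lemma summable_pnat_rpow {p : ℝ} (hp : p < -1) : Summable fun b : ℕ+ => (b : ℝ) ^ p :=
  (Real.summable_nat_rpow.2 hp).comp_injective PNat.coe_injective

section powDivNormCpow

def powDivNormCpow (n : ℕ) (q s : ℂ) : ℂ := q ^ n / (‖q‖ : ℂ) ^ (2 * s)

variable (n : ℕ)

lemma powDivNormCpow_mul (q q' s : ℂ) :
    powDivNormCpow n (q * q') s = powDivNormCpow n q s * powDivNormCpow n q' s := by
  simp only [powDivNormCpow, norm_mul, ofReal_mul,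
    mul_cpow_ofReal_nonneg (norm_nonneg q) (norm_nonneg q'), mul_pow, mul_div_mul_comm]

lemma norm_powDivNormCpow {q : ℂ} (hq : q ≠ 0) (s : ℂ) :
    ‖powDivNormCpow n q s‖ = ‖q‖ ^ ((n : ℝ) - 2 * s.re) := by
  have hq' : 0 < ‖q‖ := norm_pos_iff.2 hq
  rw [powDivNormCpow, norm_div, norm_pow, norm_cpow_eq_rpow_re_of_pos hq',
    Real.rpow_sub hq', Real.rpow_natCast]
  simp

lemma differentiable_powDivNormCpow {q : ℂ} (hq : q ≠ 0) :
    Differentiable ℂ (powDivNormCpow n q) := fun s =>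
  have hq' : (‖q‖ : ℂ) ≠ 0 := ofReal_ne_zero.2 (norm_ne_zero_iff.2 hq)
  (differentiableAt_const _).div ((differentiableAt_id.const_mul 2).const_cpow (Or.inl hq'))
    (by rw [Ne, cpow_eq_zero_iff]; exact fun h => hq' h.1)

lemma powDivNormCpow_natCast_sq (b : ℕ+) (s : ℂ) :
    powDivNormCpow n ((b : ℂ) ^ 2) s = 1 / (b : ℂ) ^ (4 * s - 2 * n) := by
  have hb : (b : ℂ) ≠ 0 := by exact_mod_cast b.ne_zero
  rw [powDivNormCpow, norm_pow, norm_natCast, ofReal_pow, ofReal_natCast,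
    ← natCast_cpow_natCast_mul, cpow_sub _ _ hb, one_div_div]
  congr 1
  · rw [← pow_mul, show (2 : ℂ) * n = ((2 * n : ℕ) : ℂ) by push_cast; ring, cpow_natCast, mul_comm]
  · push_cast; ring_nf

lemma norm_powDivNormCpow_natCast_sq (b : ℕ+) (s : ℂ) :
    ‖powDivNormCpow n ((b : ℂ) ^ 2) s‖ = (b : ℝ) ^ (2 * n - 4 * s.re) := by
  rw [norm_powDivNormCpow n (by exact_mod_cast pow_ne_zero 2 b.ne_zero), norm_pow, norm_natCast,
    ← Real.rpow_natCast, ← Real.rpow_mul (Nat.cast_nonneg _)]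
  ring_nf

lemma norm_powDivNormCpow_sub_one_le {δ R : ℝ} (hδ : 0 < δ) (hδ1 : δ ≤ 1) (hR : 1 ≤ R) {w : ℂ}
    (hδw : δ ≤ ‖w‖) (hwR : ‖w‖ ≤ R) (s : ℂ) :
    ‖powDivNormCpow n w s - 1‖ ≤
      (n * R ^ (n - 1) + 2 * ‖s‖ / δ) * Real.exp (2 * ‖s‖ * (R + 1) / δ) * ‖w - 1‖ := by
  have hw : 0 < ‖w‖ := hδ.trans_le hδw
  set u : ℂ := -(2 * s * Real.log ‖w‖)
  have hF : powDivNormCpow n w s = w ^ n * exp u := by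
    rw [powDivNormCpow, cpow_def_of_ne_zero (ofReal_ne_zero.2 hw.ne'), ← ofReal_log hw.le,
      div_eq_mul_inv, ← exp_neg]
    simp only [u]
    ring_nf
  have hw1 : ‖w - 1‖ ≤ R + 1 := (norm_sub_le _ _).trans (by simpa using hwR)
  have hu : ‖u‖ ≤ 2 * ‖s‖ / δ * ‖w - 1‖ := by
    have hlog : |Real.log ‖w‖| ≤ ‖w - 1‖ / δ :=
      (abs_log_le_abs_sub_one_div hδ hδ1 hδw).trans
        (by gcongr; simpa using abs_norm_sub_norm_le w 1)
    calc ‖u‖ = 2 * ‖s‖ * |Real.log ‖w‖| := by simp [u]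
      _ ≤ 2 * ‖s‖ * (‖w - 1‖ / δ) := by gcongr
      _ = 2 * ‖s‖ / δ * ‖w - 1‖ := by ring
  have huA : ‖u‖ ≤ 2 * ‖s‖ * (R + 1) / δ :=
    calc ‖u‖ ≤ 2 * ‖s‖ / δ * ‖w - 1‖ := hu
      _ ≤ 2 * ‖s‖ / δ * (R + 1) := by gcongr
      _ = 2 * ‖s‖ * (R + 1) / δ := by ring
  calc ‖powDivNormCpow n w s - 1‖ = ‖(w ^ n - 1 ^ n) * exp u + (exp u - 1)‖ := by
        rw [hF, one_pow]; ring_nf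
    _ ≤ ‖w ^ n - 1 ^ n‖ * ‖exp u‖ + ‖exp u - 1‖ := (norm_add_le _ _).trans (by rw [norm_mul])
    _ ≤ n * R ^ (n - 1) * ‖w - 1‖ * Real.exp (2 * ‖s‖ * (R + 1) / δ) +
          ‖u‖ * Real.exp ‖u‖ := by
        gcongr
        · exact norm_pow_sub_pow_le hwR (by simpa using hR) n
        · exact (norm_exp_le_exp_norm u).trans (Real.exp_le_exp.2 huA)
        · simpa using norm_exp_sub_sum_le_norm_mul_exp u 1
    _ ≤ n * R ^ (n - 1) * ‖w - 1‖ * Real.exp (2 * ‖s‖ * (R + 1) / δ) +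
          2 * ‖s‖ / δ * ‖w - 1‖ * Real.exp (2 * ‖s‖ * (R + 1) / δ) := by gcongr
    _ = _ := by ring

end powDivNormCpow

section SquareAsymptotics

variable {n : ℕ} {q : ℕ+ → ℂ} {C : ℝ}

lemma exists_norm_powDivNormCpow_sub_sq_le (hq : ∀ b, q b ≠ 0)
    (hqC : ∀ b : ℕ+, ‖q b - (b : ℂ) ^ 2‖ ≤ C * b) (σ M : ℝ) :
    ∃ K, ∀ (b : ℕ+) (s : ℂ), σ ≤ s.re → ‖s‖ ≤ M →
      ‖powDivNormCpow n (q b) s - powDivNormCpow n ((b : ℂ) ^ 2) s‖ ≤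
        K * (b : ℝ) ^ (2 * n - 4 * σ - 1) := by
  have hb0 : ∀ b : ℕ+, (b : ℂ) ^ 2 ≠ 0 := fun b => by exact_mod_cast pow_ne_zero 2 b.ne_zero
  have hC : 0 ≤ C := by simpa using (norm_nonneg _).trans (hqC 1)
  set w : ℕ+ → ℂ := fun b => q b / (b : ℂ) ^ 2
  have hw1 : ∀ b : ℕ+, ‖w b - 1‖ ≤ C / b := fun b => by
    have hb : (0 : ℝ) < b := by positivity
    rw [show w b - 1 = (q b - (b : ℂ) ^ 2) / (b : ℂ) ^ 2 by rw [sub_div, div_self (hb0 b)],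
      norm_div, norm_pow, Complex.norm_natCast, div_le_div_iff₀ (by positivity) hb]
    calc ‖q b - (b : ℂ) ^ 2‖ * b ≤ C * b * b := by gcongr; exact hqC b
      _ = C * (b : ℝ) ^ 2 := by ring
  have hlim : Tendsto w cofinite (𝓝 1) := by
    refine tendsto_iff_norm_sub_tendsto_zero.2 (squeeze_zero (fun _ => norm_nonneg _) hw1 ?_)
    exact (tendsto_const_div_atTop_nhds_zero_nat C).comp
      (Nat.cofinite_eq_atTop ▸ PNat.coe_injective.tendsto_cofinite)
  obtain ⟨δ, hδ, hδw⟩ :=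
    exists_pos_le_norm_of_tendsto (fun b => div_ne_zero (hq b) (hb0 b)) one_ne_zero hlim
  set δ' := min δ 1
  set R := 1 + C
  refine ⟨(n * R ^ (n - 1) + 2 * M / δ') * Real.exp (2 * M * (R + 1) / δ') * C,
    fun b s hσ hM => ?_⟩
  have hb1 : (1 : ℝ) ≤ b := by exact_mod_cast b.pos
  have hwR : ‖w b‖ ≤ R :=
    calc ‖w b‖ ≤ ‖w b - 1‖ + ‖(1 : ℂ)‖ := norm_le_norm_sub_add _ _
      _ ≤ C / b + 1 := add_le_add (hw1 b) norm_one.le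
      _ ≤ R := by
        show C / b + 1 ≤ 1 + C
        linarith [div_le_self hC hb1]
  have hsplit : powDivNormCpow n (q b) s - powDivNormCpow n ((b : ℂ) ^ 2) s =
      powDivNormCpow n ((b : ℂ) ^ 2) s * (powDivNormCpow n (w b) s - 1) := by
    rw [mul_sub, mul_one, ← powDivNormCpow_mul, mul_div_cancel₀ _ (hb0 b)]
  have hM0 : 0 ≤ M := (norm_nonneg s).trans hM
  rw [hsplit, norm_mul, norm_powDivNormCpow_natCast_sq]
  calc (b : ℝ) ^ (2 * n - 4 * s.re) * ‖powDivNormCpow n (w b) s - 1‖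
      ≤ (b : ℝ) ^ (2 * n - 4 * s.re) *
          ((n * R ^ (n - 1) + 2 * M / δ') * Real.exp (2 * M * (R + 1) / δ') * (C / b)) := by
        gcongr
        refine (norm_powDivNormCpow_sub_one_le n (lt_min hδ one_pos) (min_le_right _ _)
          (by simpa [R] using hC) ((min_le_left _ _).trans (hδw b)) hwR s).trans ?_
        gcongr
        exact hw1 b
    _ = (n * R ^ (n - 1) + 2 * M / δ') * Real.exp (2 * M * (R + 1) / δ') * C *
          (b : ℝ) ^ (2 * n - 4 * s.re - 1) := by
        rw [Real.rpow_sub_one (by positivity)]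
        ring
    _ ≤ _ := by gcongr

lemma summable_norm_powDivNormCpow_natCast_sq {s : ℂ} (hs : (2 * (n : ℝ) + 1) / 4 < s.re) :
    Summable fun b : ℕ+ => ‖powDivNormCpow n ((b : ℂ) ^ 2) s‖ := by
  simp_rw [norm_powDivNormCpow_natCast_sq]
  exact summable_pnat_rpow (by linarith)

lemma summable_norm_powDivNormCpow (hq : ∀ b, q b ≠ 0)
    (hqC : ∀ b : ℕ+, ‖q b - (b : ℂ) ^ 2‖ ≤ C * b) {s : ℂ}
    (hs : (2 * (n : ℝ) + 1) / 4 < s.re) :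
    Summable fun b => ‖powDivNormCpow n (q b) s‖ := by
  obtain ⟨K, hK⟩ := exists_norm_powDivNormCpow_sub_sq_le (n := n) hq hqC s.re ‖s‖
  refine .of_nonneg_of_le (fun _ => norm_nonneg _) (fun b => ?_)
    ((summable_norm_powDivNormCpow_natCast_sq hs).add
      ((summable_pnat_rpow (p := 2 * n - 4 * s.re - 1) (by linarith)).mul_left K))
  exact (norm_le_norm_add_norm_sub' _ _).trans (by gcongr; exact hK b s le_rfl le_rfl)

lemma differentiableOn_tsum_powDivNormCpow_sub_sq (hq : ∀ b, q b ≠ 0)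
    (hqC : ∀ b : ℕ+, ‖q b - (b : ℂ) ^ 2‖ ≤ C * b) :
    DifferentiableOn ℂ
      (fun s => ∑' b, (powDivNormCpow n (q b) s - powDivNormCpow n ((b : ℂ) ^ 2) s))
      {s | (n : ℝ) / 2 < s.re} := by
  intro s₀ hs₀
  obtain ⟨σ, hnσ, hσs₀⟩ := exists_between (α := ℝ) hs₀
  set U := {s : ℂ | σ < s.re} ∩ Metric.ball 0 (‖s₀‖ + 1)
  have hU : IsOpen U := (isOpen_lt continuous_const continuous_re).inter Metric.isOpen_ball
  have hs₀U : s₀ ∈ U := ⟨hσs₀, by simp⟩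
  obtain ⟨K, hK⟩ := exists_norm_powDivNormCpow_sub_sq_le (n := n) hq hqC σ (‖s₀‖ + 1)
  have hb0 : ∀ b : ℕ+, (b : ℂ) ^ 2 ≠ 0 := fun b => by exact_mod_cast pow_ne_zero 2 b.ne_zero
  have hdiff := differentiableOn_tsum_of_summable_norm
    ((summable_pnat_rpow (p := 2 * n - 4 * σ - 1) (by linarith)).mul_left K)
    (fun b => ((differentiable_powDivNormCpow n (hq b)).sub
      (differentiable_powDivNormCpow n (hb0 b))).differentiableOn)
    hU (fun b s hs => hK b s hs.1.le (mem_ball_zero_iff.1 hs.2).le)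
  exact (hdiff.differentiableAt (hU.mem_nhds hs₀U)).differentiableWithinAt

end SquareAsymptotics

lemma re_four_mul_sub_two_mul_natCast (s : ℂ) (n : ℕ) : (4 * s - 2 * n).re = 4 * s.re - 2 * n := by
  simp

lemma tsum_powDivNormCpow_natCast_sq (n : ℕ) {s : ℂ} (hs : (2 * (n : ℝ) + 1) / 4 < s.re) :
    ∑' b : ℕ+, powDivNormCpow n ((b : ℂ) ^ 2) s = riemannZeta (4 * s - 2 * n) := by
  have hre : 1 < (4 * s - 2 * n).re := by rw [re_four_mul_sub_two_mul_natCast]; linarith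
  simp_rw [powDivNormCpow_natCast_sq, zeta_eq_tsum_one_div_nat_add_one_cpow hre]
  rw [tsum_pnat_eq_tsum_succ (f := fun k : ℕ => 1 / (k : ℂ) ^ (4 * s - 2 * n))]
  push_cast
  rfl

lemma exists_differentiable_riemannZeta_eq_add_one_div :
    ∃ Z : ℂ → ℂ, Differentiable ℂ Z ∧ ∀ w ≠ 1, riemannZeta w = Z w + 1 / (w - 1) := by
  classical
  set f : ℂ → ℂ := fun w => riemannZeta w - 1 / (w - 1)
  obtain ⟨c, hc⟩ : ∃ c, Tendsto f (𝓝[≠] 1) (𝓝 c) := ⟨_, tendsto_riemannZeta_sub_one_div⟩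
  refine ⟨Function.update f 1 c, ?_, fun w hw => by simp [Function.update_of_ne hw, f]⟩
  have hf : DifferentiableOn ℂ f (Set.univ \ {1}) := fun w hw =>
    ((differentiableAt_riemannZeta hw.2).sub ((differentiableAt_const 1).div
      (differentiableAt_id.sub_const 1) (sub_ne_zero.2 hw.2))).differentiableWithinAt
  have hupd : DifferentiableOn ℂ (Function.update f 1 c) (Set.univ \ {1}) :=
    hf.congr fun w hw => Function.update_of_ne hw.2 _ _
  exact differentiableOn_univ.1 ((Complex.differentiableOn_compl_singleton_and_continuousAt_iff
    Filter.univ_mem).1 ⟨hupd, continuousAt_update_same.2 hc⟩)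

lemma norm_sub_mul_sub_sub_sq_le {𝕜 : Type*} [NormedField 𝕜] (α β : 𝕜) {x : 𝕜} (hx : 1 ≤ ‖x‖) :
    ‖(α - x) * (β - x) - x ^ 2‖ ≤ (‖α‖ * ‖β‖ + ‖α + β‖) * ‖x‖ :=
  calc ‖(α - x) * (β - x) - x ^ 2‖ = ‖α * β - (α + β) * x‖ := by ring_nf
    _ ≤ ‖α‖ * ‖β‖ + ‖α + β‖ * ‖x‖ := (norm_sub_le _ _).trans (by rw [norm_mul, norm_mul])
    _ ≤ (‖α‖ * ‖β‖ + ‖α + β‖) * ‖x‖ := by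
        rw [add_mul]
        exact add_le_add_left (le_mul_of_one_le_right (by positivity) hx) _

lemma Xi0Term_eq_powDivNormCpow (n : ℕ) (z1 z2 s : ℂ) (b : ℕ+) :
    Xi0Term n z1 z2 s b = powDivNormCpow n ((conj z2 - conj z1 - b) * (z2 - conj z1 - b)) s := by
  have h1 : ‖z2 - z1 - (b : ℂ)‖ = ‖conj z2 - conj z1 - b‖ := by
    rw [← norm_conj]; simp
  have h2 : ‖conj z2 - z1 - (b : ℂ)‖ = ‖z2 - conj z1 - b‖ := by
    rw [← norm_conj]; simp
  rw [Xi0Term, powDivNormCpow, h1, h2, mul_pow, norm_mul, ofReal_mul,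
    mul_cpow_ofReal_nonneg (norm_nonneg _) (norm_nonneg _)]

lemma conj_sub_mul_sub_ne_zero {z1 z2 : ℂ} (hz1 : 0 < z1.im) (hz2 : 0 < z2.im)
    (hdiff : ∀ b : ℤ, z2 - z1 ≠ (b : ℂ)) (b : ℕ+) :
    (conj z2 - conj z1 - b) * (z2 - conj z1 - b) ≠ 0 := by
  refine mul_ne_zero (fun h => hdiff b ?_) (fun h => ?_)
  · have := congrArg conj h
    simp only [map_sub, conj_conj, map_natCast, map_zero] at this
    rw [sub_eq_zero.1 this]; simp
  · have := congrArg im h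
    simp only [sub_im, conj_im, natCast_im, sub_zero, zero_im] at this
    linarith

/-- (i) the series `Ξ_n⁰` converges absolutely for `Re(s) > (2n+1)/4`;
(ii) `s ↦ Ξ_n⁰(z₁,z₂,s) − 4ζ(4s−2n)` extends holomorphically to `{Re(s) > n/2}`;
(iii) consequently `Ξ_n⁰` extends meromorphically to `{Re(s) > n/2}`, whose only pole there
is a simple pole at `s = (2n+1)/4` with residue `1`. -/
theorem Xi0_convergence_and_continuation (n : ℕ) (z1 z2 : ℂ)
    (hz1 : 0 < z1.im) (hz2 : 0 < z2.im) (hdiff : ∀ b : ℤ, z2 - z1 ≠ (b : ℂ)) :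
    (∀ s : ℂ, (2 * (n : ℝ) + 1) / 4 < s.re →
      Summable (fun b : ℕ+ => ‖Xi0Term n z1 z2 s b‖)) ∧
    (∃ G : ℂ → ℂ, DifferentiableOn ℂ G {s : ℂ | (n : ℝ) / 2 < s.re} ∧
      ∀ s : ℂ, (2 * (n : ℝ) + 1) / 4 < s.re →
        G s = Xi0 n z1 z2 s - 4 * riemannZeta (4 * s - 2 * n)) ∧
    (∃ H : ℂ → ℂ, DifferentiableOn ℂ H {s : ℂ | (n : ℝ) / 2 < s.re} ∧
      ∀ s : ℂ, (2 * (n : ℝ) + 1) / 4 < s.re →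
        Xi0 n z1 z2 s = (s - ((2 * n + 1 : ℂ) / 4))⁻¹ + H s) := by
  set q : ℕ+ → ℂ := fun b => (conj z2 - conj z1 - b) * (z2 - conj z1 - b)
  have hq : ∀ b, q b ≠ 0 := conj_sub_mul_sub_ne_zero hz1 hz2 hdiff
  have hqC : ∀ b : ℕ+, ‖q b - (b : ℂ) ^ 2‖ ≤ _ * b := fun b => by
    simpa using norm_sub_mul_sub_sub_sq_le (conj z2 - conj z1) (z2 - conj z1) (x := (b : ℂ))
      (by rw [Complex.norm_natCast]; exact_mod_cast b.pos)
  have hsummable : ∀ s : ℂ, (2 * (n : ℝ) + 1) / 4 < s.re →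
      Summable fun b => ‖Xi0Term n z1 z2 s b‖ := fun s hs => by
    simpa only [Xi0Term_eq_powDivNormCpow] using summable_norm_powDivNormCpow hq hqC hs
  set G : ℂ → ℂ := fun s =>
    4 * ∑' b, (powDivNormCpow n (q b) s - powDivNormCpow n ((b : ℂ) ^ 2) s)
  have hG : DifferentiableOn ℂ G {s : ℂ | (n : ℝ) / 2 < s.re} :=
    (differentiableOn_tsum_powDivNormCpow_sub_sq hq hqC).const_mul 4
  have hXi : ∀ s : ℂ, (2 * (n : ℝ) + 1) / 4 < s.re →
      Xi0 n z1 z2 s = G s + 4 * riemannZeta (4 * s - 2 * n) := fun s hs => by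
    rw [← tsum_powDivNormCpow_natCast_sq n hs]
    simp only [G, Xi0, Xi0Term_eq_powDivNormCpow]
    rw [(summable_norm_powDivNormCpow hq hqC hs).of_norm.tsum_sub
        (summable_norm_powDivNormCpow_natCast_sq hs).of_norm]
    ring
  obtain ⟨Z, hZ, hζ⟩ := exists_differentiable_riemannZeta_eq_add_one_div
  refine ⟨hsummable, ⟨G, hG, fun s hs => by rw [hXi s hs]; ring⟩,
    ⟨fun s => G s + 4 * Z (4 * s - 2 * n), hG.add ?_, fun s hs => ?_⟩⟩
  · exact ((hZ.comp ((differentiable_id.const_mul 4).sub_const _)).const_mul 4).differentiableOn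
  · have hpole : 4 * s - 2 * n ≠ 1 := fun h => by
      have := congrArg re h
      rw [re_four_mul_sub_two_mul_natCast, one_re] at this
      linarith
    have hne : s - (2 * n + 1 : ℂ) / 4 ≠ 0 := fun h => hpole (by linear_combination 4 * h)
    rw [hXi s hs, hζ _ hpole, show 4 * s - 2 * n - 1 = 4 * (s - (2 * n + 1 : ℂ) / 4) by ring]
    field_simp
    ring
end
end

section
/- Let k > 2 be an even integer, m ≥ 1 an integer, and z2 ∈ H fixed. Then the series ω_m(z1, conj(z2), k) = ∑_{a,b,c,d ∈ ℤ, ad−bc=m} (c z1 conj(z2) + d conj(z2) − a z1 − b)^{−k} converges absolutely for every z1 ∈ H, and the function z1 ↦ ω_m(z1, conj(z2), k) is a holomorphic cusp form of weight k for SL_2(ℤ): it is holomorphic on H, satisfies ω_m((a z1 + b)/(c z1 + d), conj(z2), k) = (c z1 + d)^k ω_m(z1, conj(z2), k) for all [[a,b],[c,d]] ∈ SL_2(ℤ), and tends to 0 as Im(z1) → ∞. -/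
open Complex Filter Topology

noncomputable section

/-- The modular group `SL₂(ℤ)`. -/
abbrev SL2Z := Matrix.SpecialLinearGroup (Fin 2) ℤ

/-- The Möbius action of `γ ∈ SL₂(ℤ)` on a complex number. -/
def moebius (g : SL2Z) (z : ℂ) : ℂ :=
  (((g 0 0 : ℤ) : ℂ) * z + ((g 0 1 : ℤ) : ℂ)) / (((g 1 0 : ℤ) : ℂ) * z + ((g 1 1 : ℤ) : ℂ))

/-- `μ_γ(z, −w) = c z w + d w − a z − b` for an integer matrix `γ = [[a,b],[c,d]]`. -/
def muM (g : Matrix (Fin 2) (Fin 2) ℤ) (z w : ℂ) : ℂ :=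
  ((g 1 0 : ℤ) : ℂ) * z * w + ((g 1 1 : ℤ) : ℂ) * w - ((g 0 0 : ℤ) : ℂ) * z - ((g 0 1 : ℤ) : ℂ)

/-- Zagier's kernel `ω_m(z₁, w, k) = ∑_{det γ = m} μ_γ(z₁, −w)^{−k}` (with `w = conj z₂`). -/
def omegaKer (m k : ℕ) (z1 w : ℂ) : ℂ :=
  ∑' g : {g : Matrix (Fin 2) (Fin 2) ℤ // g.det = (m : ℤ)}, 1 / (muM g.1 z1 w) ^ k

/-!
Write `μ_γ(z, w) = u w - v` with `u = c z + d`, `v = a z + b`. Since `Im (v ū) = det γ · Im z ≥ 0`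
and `Im w < 0`, the imaginary part of `μ_γ ū` gives `|μ_γ| ≥ ε(w) (|u| + |v|)` with
`ε(w) = -Im w / (1 + 2 |w|)`, and the Eisenstein-series bound `|c z + d| ≥ r(z) ‖(c, d)‖` turns
this into a lower bound by the sizes of both rows of `γ`. A matrix of determinant `m ≠ 0` is
determined by its bottom row and one entry `s` of its top row, so on every region where `r` is
bounded below the terms `μ_γ^{-k}` are dominated by `‖(c, d)‖^{-(k - 3/2)} max(1, |s|)^{-3/2}`,
which is summable over `ℤ² × ℤ` once `k ≥ 4`. This gives absolute convergence and, by Weierstrass,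
holomorphy. Modularity follows from `μ_{γδ}(z, w) = (c' z + d') μ_γ(δ z, w)` by reindexing
`γ ↦ γ δ`. For the decay, `|μ_γ| ≥ ε(w) Im z` makes every term tend to `0`; dominated convergence
applies on the strip `|Re z| ≤ 1`, and periodicity reduces everything to that strip.
-/

open scoped UpperHalfPlane ComplexConjugate
open EisensteinSeries

lemma inv_pow_le_inv_pow_mul_rpow_mul_rpow {A α N₁ N₂ s t : ℝ} {k : ℕ} (hst : s + t = k)
    (hs : 0 ≤ s) (ht : 0 ≤ t) (hα : 0 < α) (hN₁ : 0 < N₁) (hN₂ : 0 < N₂)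
    (h₁ : α * N₁ ≤ A) (h₂ : α * N₂ ≤ A) :
    (A ^ k)⁻¹ ≤ (α ^ k)⁻¹ * (N₁ ^ (-s) * N₂ ^ (-t)) := by
  have hA : 0 < A := (mul_pos hα hN₁).trans_le h₁
  have key : α ^ k * (N₁ ^ s * N₂ ^ t) ≤ A ^ k := calc
    α ^ k * (N₁ ^ s * N₂ ^ t) = (α * N₁) ^ s * (α * N₂) ^ t := by
      rw [Real.mul_rpow hα.le hN₁.le, Real.mul_rpow hα.le hN₂.le, ← Real.rpow_natCast, ← hst,
        Real.rpow_add hα]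
      ring
    _ ≤ A ^ s * A ^ t := by gcongr
    _ = A ^ k := by rw [← Real.rpow_add hA, hst, Real.rpow_natCast]
  rw [Real.rpow_neg hN₁.le, Real.rpow_neg hN₂.le, ← mul_inv, ← mul_inv]
  exact inv_anti₀ (by positivity) key

def muConst (w : ℂ) : ℝ := -w.im / (1 + 2 * ‖w‖)

lemma muConst_pos {w : ℂ} (hw : w.im < 0) : 0 < muConst w :=
  div_pos (neg_pos.2 hw) (by positivity)

/-- `Im ((u w - v) ū) = |u|² Im w - Im (v ū)` has modulus at least `|u|² |Im w|`, so
`|u w - v| ≥ |u| |Im w|`; the bound on `|v|` then follows from the triangle inequality. -/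
lemma muConst_mul_le_norm_mul_sub {u v w : ℂ} (hw : w.im < 0) (huv : 0 ≤ (v * conj u).im) :
    muConst w * (‖u‖ + ‖v‖) ≤ ‖u * w - v‖ := by
  set A := ‖u * w - v‖
  have hy : 0 < -w.im := neg_pos.2 hw
  have hyw : -w.im ≤ ‖w‖ := (neg_le_abs _).trans (abs_im_le_norm w)
  have hu : ‖u‖ * -w.im ≤ A := by
    have him : ((u * w - v) * conj u).im = ‖u‖ ^ 2 * w.im - (v * conj u).im := by
      rw [sub_mul, mul_right_comm, mul_conj, normSq_eq_norm_sq, sub_im, im_ofReal_mul]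
    have h : ‖u‖ * (‖u‖ * -w.im) ≤ ‖u‖ * A := calc
      ‖u‖ * (‖u‖ * -w.im) ≤ -((u * w - v) * conj u).im := by rw [him]; nlinarith
      _ ≤ ‖(u * w - v) * conj u‖ := (neg_le_abs _).trans (abs_im_le_norm _)
      _ = ‖u‖ * A := by rw [norm_mul, norm_conj, mul_comm]
    rcases (norm_nonneg u).eq_or_lt with h0 | h0
    · rw [← h0, zero_mul]
      exact norm_nonneg _
    · exact le_of_mul_le_mul_left h h0
  have hv : ‖v‖ ≤ A + ‖u‖ * ‖w‖ := calc
    ‖v‖ = ‖u * w - (u * w - v)‖ := by rw [sub_sub_cancel]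
    _ ≤ ‖u * w‖ + A := norm_sub_le _ _
    _ = A + ‖u‖ * ‖w‖ := by rw [norm_mul, add_comm]
  rw [muConst, div_mul_eq_mul_div, div_le_iff₀ (by positivity)]
  nlinarith [mul_le_mul_of_nonneg_left hv hy.le, mul_le_mul_of_nonneg_right hu (norm_nonneg w),
    mul_le_mul_of_nonneg_right hyw (norm_nonneg (u * w - v))]

lemma im_mul_conj_linear (a b c d : ℝ) (z : ℂ) :
    ((a * z + b) * conj (c * z + d)).im = (a * d - b * c) * z.im := by
  simp only [mul_im, mul_re, add_re, add_im, conj_re, conj_im, ofReal_re, ofReal_im]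
  ring

lemma muM_eq_mul_sub (g : Matrix (Fin 2) (Fin 2) ℤ) (z w : ℂ) :
    muM g z w = (g 1 0 * z + g 1 1) * w - (g 0 0 * z + g 0 1) := by
  unfold muM
  ring

lemma muConst_mul_le_norm_muM {g : Matrix (Fin 2) (Fin 2) ℤ} (hg : 0 ≤ g.det) {z : ℂ}
    (hz : 0 < z.im) {w : ℂ} (hw : w.im < 0) :
    muConst w * (‖(g 1 0 * z + g 1 1 : ℂ)‖ + ‖(g 0 0 * z + g 0 1 : ℂ)‖) ≤ ‖muM g z w‖ := by
  rw [muM_eq_mul_sub]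
  refine muConst_mul_le_norm_mul_sub hw ?_
  have h := im_mul_conj_linear (g 0 0) (g 0 1) (g 1 0) (g 1 1) z
  simp only [ofReal_intCast] at h
  rw [h]
  rw [Matrix.det_fin_two] at hg
  exact mul_nonneg (by exact_mod_cast hg) hz.le

lemma row_ne_zero {g : Matrix (Fin 2) (Fin 2) ℤ} (hg : g.det ≠ 0) (i : Fin 2) : g i ≠ 0 :=
  fun h => hg (Matrix.det_eq_zero_of_row_eq_zero i (congrFun h))

lemma one_le_norm_of_ne_zero {ι : Type*} [Fintype ι] {x : ι → ℤ} (hx : x ≠ 0) : 1 ≤ ‖x‖ := by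
  obtain ⟨i, hi⟩ := Function.ne_iff.1 hx
  calc (1 : ℝ) ≤ ‖x i‖ := by rw [Int.norm_eq_abs]; exact_mod_cast Int.one_le_abs hi
    _ ≤ ‖x‖ := norm_le_pi_norm x i

lemma r_mul_norm_le_norm (z : ℍ) (x : Fin 2 → ℤ) : r z * ‖x‖ ≤ ‖x 0 * (z : ℂ) + x 1‖ := by
  rcases eq_or_ne x 0 with rfl | hx
  · simp
  · exact r_mul_max_le z hx

lemma linear_ne_zero_of_ne_zero (z : ℍ) {x : Fin 2 → ℤ} (hx : x ≠ 0) :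
    x 0 * (z : ℂ) + x 1 ≠ 0 :=
  norm_pos_iff.1 <| (mul_pos (r_pos z) (zero_lt_one.trans_le (one_le_norm_of_ne_zero hx))).trans_le
    (r_mul_norm_le_norm z x)

lemma muConst_mul_r_mul_le_norm_muM {g : Matrix (Fin 2) (Fin 2) ℤ} (hg : 0 ≤ g.det) (z : ℍ)
    {w : ℂ} (hw : w.im < 0) : muConst w * (r z * (‖g 1‖ + ‖g 0‖)) ≤ ‖muM g z w‖ := by
  refine le_trans ?_ (muConst_mul_le_norm_muM hg z.im_pos hw)
  rw [mul_add]
  gcongr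
  exacts [(muConst_pos hw).le, r_mul_norm_le_norm z (g 1), r_mul_norm_le_norm z (g 0)]

lemma muConst_mul_im_le_norm_muM {g : Matrix (Fin 2) (Fin 2) ℤ} (hg : 0 < g.det) {z : ℂ}
    (hz : 0 < z.im) {w : ℂ} (hw : w.im < 0) : muConst w * z.im ≤ ‖muM g z w‖ := by
  refine le_trans ?_ (muConst_mul_le_norm_muM hg.le hz hw)
  have hcol : (1 : ℝ) ≤ |(g 1 0 : ℝ)| + |(g 0 0 : ℝ)| := by
    have h : g 1 0 ≠ 0 ∨ g 0 0 ≠ 0 := by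
      by_contra! h
      refine hg.ne' (Matrix.det_eq_zero_of_column_eq_zero 0 fun i => ?_)
      fin_cases i <;> simp [h.1, h.2]
    have : (1 : ℤ) ≤ |g 1 0| + |g 0 0| := by
      rcases h with h | h <;> linarith [Int.one_le_abs h, abs_nonneg (g 1 0), abs_nonneg (g 0 0)]
    exact_mod_cast this
  have him (a b : ℤ) : |(a : ℝ)| * z.im ≤ ‖(a * z + b : ℂ)‖ := by
    simpa [abs_mul, abs_of_pos hz] using abs_im_le_norm (a * z + b : ℂ)
  gcongr
  · exact (muConst_pos hw).le
  · nlinarith [him (g 1 0) (g 1 1), him (g 0 0) (g 0 1)]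

abbrev MatDet (m : ℕ) := {g : Matrix (Fin 2) (Fin 2) ℤ // g.det = (m : ℤ)}

lemma MatDet.det_pos {m : ℕ} (hm : m ≠ 0) (g : MatDet m) : 0 < g.1.det := by
  rw [g.2]
  exact_mod_cast Nat.pos_of_ne_zero hm

/-- Together with the bottom row, this entry determines a matrix of nonzero determinant: if
`c ≠ 0` then `b = (a d - det) / c`, and if `c = 0` then `a = det / d`. -/
def topPivot (g : Matrix (Fin 2) (Fin 2) ℤ) : ℤ := if g 1 0 = 0 then g 0 1 else g 0 0

def encode {m : ℕ} (g : MatDet m) : (Fin 2 → ℤ) × ℤ := (g.1 1, topPivot g.1)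

lemma norm_topPivot_le (g : Matrix (Fin 2) (Fin 2) ℤ) : ‖topPivot g‖ ≤ ‖g 0‖ := by
  unfold topPivot
  split
  exacts [norm_le_pi_norm (g 0) 1, norm_le_pi_norm (g 0) 0]

lemma encode_injective {m : ℕ} (hm : m ≠ 0) : Function.Injective (encode (m := m)) := by
  rintro ⟨g, hg⟩ ⟨g', hg'⟩ h
  simp only [encode, Prod.mk.injEq] at h
  obtain ⟨hrow, hpiv⟩ := h
  have hc : g 1 0 = g' 1 0 := congrFun hrow 0
  have hd : g 1 1 = g' 1 1 := congrFun hrow 1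
  rw [Matrix.det_fin_two] at hg hg'
  have htop : g 0 0 = g' 0 0 ∧ g 0 1 = g' 0 1 := by
    unfold topPivot at hpiv
    by_cases h0 : g 1 0 = 0
    · rw [if_pos h0, if_pos (hc ▸ h0)] at hpiv
      have hd0 : g 1 1 ≠ 0 := by rintro h1; simp [h0, h1] at hg; omega
      refine ⟨mul_right_cancel₀ hd0 ?_, hpiv⟩
      rw [← hc, ← hd, h0] at hg'
      rw [h0] at hg
      linarith
    · rw [if_neg h0, if_neg (hc ▸ h0)] at hpiv
      refine ⟨hpiv, mul_right_cancel₀ h0 ?_⟩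
      rw [← hc, ← hd, ← hpiv] at hg'
      linarith
  ext i j
  fin_cases i <;> fin_cases j
  exacts [htop.1, htop.2, hc, hd]

def majorant (s t : ℝ) (p : (Fin 2 → ℤ) × ℤ) : ℝ := ‖p.1‖ ^ (-s) * max 1 ‖p.2‖ ^ (-t)

lemma summable_max_one_norm_rpow {t : ℝ} (ht : 1 < t) :
    Summable fun n : ℤ => max 1 ‖n‖ ^ (-t) := by
  refine (Real.summable_abs_int_rpow ht).congr_cofinite ?_
  filter_upwards [(Set.finite_singleton (0 : ℤ)).compl_mem_cofinite] with n hn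
  have h : (1 : ℝ) ≤ ‖n‖ := by rw [Int.norm_eq_abs]; exact_mod_cast Int.one_le_abs hn
  rw [max_eq_right h, Int.norm_eq_abs]

lemma summable_majorant {s t : ℝ} (hs : 2 < s) (ht : 1 < t) : Summable (majorant s t) := by
  have h₁ : Summable fun x : Fin 2 → ℤ => ‖‖x‖ ^ (-s)‖ := by
    simpa [Real.norm_of_nonneg (Real.rpow_nonneg (norm_nonneg _) _)] using
      summable_one_div_norm_rpow hs
  have h₂ : Summable fun n : ℤ => ‖max 1 ‖n‖ ^ (-t)‖ := by
    simpa [Real.norm_of_nonneg (Real.rpow_nonneg (zero_le_one.trans (le_max_left _ _)) _)] using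
      summable_max_one_norm_rpow ht
  exact summable_mul_of_summable_norm h₁ h₂

lemma norm_one_div_muM_pow_le {m k : ℕ} (hm : m ≠ 0) (g : MatDet m) (z : ℍ) {w : ℂ}
    (hw : w.im < 0) {δ : ℝ} (hδ : 0 < δ) (hδz : δ ≤ r z) {s t : ℝ} (hst : s + t = k)
    (hs : 0 ≤ s) (ht : 0 ≤ t) :
    ‖1 / muM g.1 z w ^ k‖ ≤ ((muConst w * δ) ^ k)⁻¹ * majorant s t (encode g) := by
  have hdet := MatDet.det_pos hm g
  have h₁ := one_le_norm_of_ne_zero (row_ne_zero hdet.ne' 1)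
  have h₀ := one_le_norm_of_ne_zero (row_ne_zero hdet.ne' 0)
  have hε := muConst_pos hw
  have hδμ : muConst w * δ * (‖g.1 1‖ + ‖g.1 0‖) ≤ ‖muM g.1 z w‖ := by
    refine le_trans ?_ (muConst_mul_r_mul_le_norm_muM hdet.le z hw)
    rw [mul_assoc]
    gcongr
  rw [norm_div, norm_one, norm_pow, one_div]
  dsimp only [majorant, encode]
  refine inv_pow_le_inv_pow_mul_rpow_mul_rpow hst hs ht (by positivity) (by linarith)
    (by positivity) (le_trans ?_ hδμ) (le_trans ?_ hδμ) <;> gcongr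
  · exact le_add_of_nonneg_right (norm_nonneg _)
  · exact (max_le h₀ (norm_topPivot_le g.1)).trans (le_add_of_nonneg_left (norm_nonneg _))

lemma exists_summable_norm_one_div_muM_pow_le {m k : ℕ} (hm : m ≠ 0) (hk : 3 < k) {w : ℂ}
    (hw : w.im < 0) {δ : ℝ} (hδ : 0 < δ) :
    ∃ u : MatDet m → ℝ, Summable u ∧
      ∀ g (z : ℍ), δ ≤ r z → ‖1 / muM g.1 z w ^ k‖ ≤ u g := by
  have hk' : (4 : ℝ) ≤ k := by exact_mod_cast hk
  refine ⟨fun g => ((muConst w * δ) ^ k)⁻¹ * majorant (k - 3 / 2) (3 / 2) (encode g), ?_,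
    fun g z hδz => norm_one_div_muM_pow_le hm g z hw hδ hδz (by ring) (by linarith) (by norm_num)⟩
  exact ((summable_majorant (by linarith) (by norm_num)).comp_injective
    (encode_injective hm)).mul_left _

lemma summable_norm_one_div_muM_pow {m k : ℕ} (hm : m ≠ 0) (hk : 3 < k) {w : ℂ}
    (hw : w.im < 0) {z : ℂ} (hz : 0 < z.im) :
    Summable fun g : MatDet m => ‖1 / muM g.1 z w ^ k‖ := by
  obtain ⟨u, hu, hle⟩ := exists_summable_norm_one_div_muM_pow_le hm hk hw (r_pos ⟨z, hz⟩)
  exact hu.of_nonneg_of_le (fun _ => norm_nonneg _) fun g => hle g ⟨z, hz⟩ le_rfl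

lemma differentiableOn_omegaKer {m k : ℕ} (hm : m ≠ 0) (hk : 3 < k) {w : ℂ} (hw : w.im < 0) :
    DifferentiableOn ℂ (omegaKer m k · w) {z : ℂ | 0 < z.im} := by
  refine SummableLocallyUniformlyOn.differentiableOn UpperHalfPlane.isOpen_upperHalfPlaneSet
    (SummableLocallyUniformlyOn_of_locally_bounded UpperHalfPlane.isOpen_upperHalfPlaneSet
      fun K hK hKc => ?_) fun g z hz => ?_
  · obtain ⟨A, B, hB, hAB⟩ := UpperHalfPlane.subset_verticalStrip_of_isCompact
      (UpperHalfPlane.isEmbedding_coe.isCompact_preimage' hKc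
        (by rwa [UpperHalfPlane.range_coe]))
    obtain ⟨u, hu, hle⟩ := exists_summable_norm_one_div_muM_pow_le hm hk hw (r_pos ⟨⟨A, B⟩, hB⟩)
    exact ⟨u, hu, fun g z hz =>
      hle g ⟨z, hK hz⟩ (r_lower_bound_on_verticalStrip _ hB (hAB (show z ∈ K from hz)))⟩
  · have hμ : muM g.1 z w ≠ 0 := norm_pos_iff.1 <|
      (mul_pos (muConst_pos hw) hz).trans_le (muConst_mul_im_le_norm_muM (MatDet.det_pos hm g) hz hw)
    exact (differentiableAt_const 1).div ((by unfold muM; fun_prop :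
      DifferentiableAt ℂ (muM g.1 · w) z).pow k) (pow_ne_zero k hμ)

lemma muM_mul (g : Matrix (Fin 2) (Fin 2) ℤ) (γ : SL2Z) {z : ℂ} (w : ℂ)
    (hD : (γ 1 0 * z + γ 1 1 : ℂ) ≠ 0) :
    muM (g * γ) z w = (γ 1 0 * z + γ 1 1) * muM g (moebius γ z) w := by
  unfold muM moebius
  simp only [Matrix.mul_apply, Fin.sum_univ_two, Int.cast_add, Int.cast_mul]
  field_simp
  ring

def mulRightSL (m : ℕ) (γ : SL2Z) : MatDet m ≃ MatDet m :=
  (Units.mulRight (γ : GL (Fin 2) ℤ)).subtypeEquiv fun g => by simp [Matrix.det_mul]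

lemma omegaKer_moebius (m k : ℕ) (w : ℂ) (γ : SL2Z) {z : ℂ} (hz : 0 < z.im) :
    omegaKer m k (moebius γ z) w = (γ 1 0 * z + γ 1 1) ^ k * omegaKer m k z w := by
  have hD : (γ 1 0 * z + γ 1 1 : ℂ) ≠ 0 :=
    linear_ne_zero_of_ne_zero ⟨z, hz⟩ (row_ne_zero (by simp) 1)
  unfold omegaKer
  rw [← (mulRightSL m γ).tsum_eq (fun g => 1 / muM g.1 z w ^ k), ← tsum_mul_left]
  refine tsum_congr fun g => ?_
  show _ = _ * (1 / muM (g.1 * γ) z w ^ k)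
  rw [muM_mul _ _ _ hD, mul_pow, one_div, one_div, mul_inv, ← mul_assoc,
    mul_inv_cancel₀ (pow_ne_zero _ hD), one_mul]

lemma omegaKer_add_intCast (m k : ℕ) (w : ℂ) (n : ℤ) {z : ℂ} (hz : 0 < z.im) :
    omegaKer m k (z + n) w = omegaKer m k z w := by
  have hT : ((ModularGroup.T ^ n : SL2Z) : Matrix (Fin 2) (Fin 2) ℤ) = !![1, n; 0, 1] :=
    ModularGroup.coe_T_zpow n
  simpa [moebius, hT] using omegaKer_moebius m k w (ModularGroup.T ^ n) hz

lemma tendsto_one_div_muM_pow {g : Matrix (Fin 2) (Fin 2) ℤ} (hg : 0 < g.det) {k : ℕ}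
    (hk : k ≠ 0) {w : ℂ} (hw : w.im < 0) :
    Tendsto (fun z => 1 / muM g z w ^ k) (comap im atTop) (𝓝 0) := by
  rw [tendsto_zero_iff_norm_tendsto_zero]
  have hε := muConst_pos hw
  have hlim : Tendsto (fun z : ℂ => ((muConst w * z.im) ^ k)⁻¹) (comap im atTop) (𝓝 0) :=
    tendsto_inv_atTop_zero.comp
      ((tendsto_pow_atTop hk).comp (tendsto_comap.const_mul_atTop hε))
  refine squeeze_zero' (Eventually.of_forall fun _ => norm_nonneg _) ?_ hlim
  filter_upwards [tendsto_comap.eventually_gt_atTop 0] with z hz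
  rw [norm_div, norm_one, norm_pow, one_div]
  exact inv_anti₀ (by positivity)
    (pow_le_pow_left₀ (by positivity) (muConst_mul_im_le_norm_muM hg hz hw) k)

lemma tendsto_omegaKer_of_abs_re_le_one {m k : ℕ} (hm : m ≠ 0) (hk : 3 < k) {w : ℂ}
    (hw : w.im < 0) :
    Tendsto (omegaKer m k · w) (comap im atTop ⊓ 𝓟 {z | |z.re| ≤ 1}) (𝓝 0) := by
  obtain ⟨u, hu, hle⟩ := exists_summable_norm_one_div_muM_pow_le hm hk hw (r_pos ⟨⟨1, 1⟩, one_pos⟩)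
  have him : Tendsto im (comap im atTop ⊓ 𝓟 {z | |z.re| ≤ 1}) atTop :=
    tendsto_comap.mono_left inf_le_left
  have h := tendsto_tsum_of_dominated_convergence (f := fun z (g : MatDet m) => 1 / muM g.1 z w ^ k)
    hu (fun g => (tendsto_one_div_muM_pow (MatDet.det_pos hm g) (by omega) hw).mono_left inf_le_left) <| by
      filter_upwards [him.eventually_ge_atTop 1, mem_inf_of_right (mem_principal_self _)]
        with z h₁ h₂ g
      exact hle g ⟨z, one_pos.trans_le h₁⟩ (r_lower_bound_on_verticalStrip _ one_pos ⟨h₂, h₁⟩)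
  rwa [tsum_zero] at h

lemma tendsto_omegaKer_comap_im_atTop {m k : ℕ} (hm : m ≠ 0) (hk : 3 < k) {w : ℂ}
    (hw : w.im < 0) : Tendsto (omegaKer m k · w) (comap im atTop) (𝓝 0) := by
  have hshift : Tendsto (fun z : ℂ => z + (-⌊z.re⌋ : ℤ)) (comap im atTop)
      (comap im atTop ⊓ 𝓟 {z | |z.re| ≤ 1}) := by
    refine tendsto_inf.2 ⟨tendsto_comap_iff.2 ?_, tendsto_principal.2 (Eventually.of_forall ?_)⟩
    · exact tendsto_comap.congr fun z => by simp
    · intro z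
      have h : (z + (-⌊z.re⌋ : ℤ)).re = Int.fract z.re := by simp [Int.fract, sub_eq_add_neg]
      show |(z + _).re| ≤ 1
      rw [h, abs_of_nonneg (Int.fract_nonneg _)]
      exact (Int.fract_lt_one _).le
  refine ((tendsto_omegaKer_of_abs_re_le_one hm hk hw).comp hshift).congr' ?_
  filter_upwards [tendsto_comap.eventually_gt_atTop 0] with z hz
  exact omegaKer_add_intCast m k w _ hz

/-- For even `k > 2`, the series `ω_m(z₁, conj z₂, k)` converges absolutely and defines, as a
function of `z₁`, a holomorphic cusp form of weight `k` for `SL₂(ℤ)`. -/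
theorem omegaKer_is_cusp_form (k m : ℕ) (hk : Even k) (hk2 : 2 < k) (hm : 1 ≤ m)
    (z2 : ℂ) (hz2 : 0 < z2.im) :
    (∀ z1 : ℂ, 0 < z1.im →
      Summable (fun g : {g : Matrix (Fin 2) (Fin 2) ℤ // g.det = (m : ℤ)} =>
        ‖1 / (muM g.1 z1 (starRingEnd ℂ z2)) ^ k‖)) ∧
    DifferentiableOn ℂ (fun z1 => omegaKer m k z1 (starRingEnd ℂ z2)) {z : ℂ | 0 < z.im} ∧
    (∀ g : SL2Z, ∀ z1 : ℂ, 0 < z1.im →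
      omegaKer m k (moebius g z1) (starRingEnd ℂ z2) =
        (((g 1 0 : ℤ) : ℂ) * z1 + ((g 1 1 : ℤ) : ℂ)) ^ k * omegaKer m k z1 (starRingEnd ℂ z2)) ∧
    Tendsto (fun z1 => omegaKer m k z1 (starRingEnd ℂ z2))
      (Filter.comap Complex.im atTop) (𝓝 0) := by
  have hk3 : 3 < k := by obtain ⟨j, rfl⟩ := hk; omega
  have hm0 : m ≠ 0 := by omega
  have hw : (conj z2).im < 0 := by simpa using hz2
  exact ⟨fun z1 hz1 => summable_norm_one_div_muM_pow hm0 hk3 hw hz1,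
    differentiableOn_omegaKer hm0 hk3 hw, fun γ z1 hz1 => omegaKer_moebius m k _ γ hz1,
    tendsto_omegaKer_comap_im_atTop hm0 hk3 hw⟩
end
end
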